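/- For every label x and all nested sequents X and Y, the labeled polytrees 𝔏ₓ(X, ∘{Y}) and 𝔏ₓ(•{X}, Y) are isomorphic as labeled graphs, i.e., there is a bijection f between their vertex sets such that (u, v) is an edge iff (f u, f v) is an edge, and every vertex has the same label (multiset of formulae) as its image. -/

import Mathlib

set_option autoImplicit false

/-! # Common definitions: tense logics, nested/labeled/display calculi
    (following Ciabattoni, Lyon, Ramanayake, Tiu,
     "Display to Labeled Proofs and Back Again for Tense Logics") -/

/-- Diamonds: `wd` = ◇ (white diamond), `bd` = ◆ (black diamond). -/
inductive Dmd : Type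
  | wd
  | bd
deriving DecidableEq, Repr

/-- Tense formulae in negation normal form:
    `A ::= p | p̄ | A ∧ A | A ∨ A | □A | ◇A | ■A | ◆A`. -/
inductive Formula : Type
  | pos : Nat → Formula      -- propositional variable p
  | neg : Nat → Formula      -- negated propositional variable p̄
  | and : Formula → Formula → Formula
  | or : Formula → Formula → Formula
  | box : Formula → Formula   -- □
  | dia : Formula → Formula   -- ◇
  | bbox : Formula → Formula  -- ■
  | bdia : Formula → Formula  -- ◆
deriving DecidableEq, Repr

/-- The De Morgan dual `Ā` of a formula `A`. -/
def Formula.dual : Formula → Formula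
  | .pos p => .neg p
  | .neg p => .pos p
  | .and A B => .or A.dual B.dual
  | .or A B => .and A.dual B.dual
  | .box A => .dia A.dual
  | .dia A => .box A.dual
  | .bbox A => .bdia A.dual
  | .bdia A => .bbox A.dual

/-- `A → B` is defined as `Ā ∨ B`. -/
def Formula.imp (A B : Formula) : Formula := A.dual.or B

/-- `A ↔ B` is defined as `(A → B) ∧ (B → A)`. -/
def Formula.iffF (A B : Formula) : Formula := (A.imp B).and (B.imp A)

/-- `⟨?⟩A` for a diamond `⟨?⟩ ∈ {◇, ◆}`. -/
def dmdF : Dmd → Formula → Formula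
  | .wd, A => .dia A
  | .bd, A => .bdia A

/-- `⟨?⟩₁…⟨?⟩ₘ A` for a string of diamonds. -/
def applyDmds : List Dmd → Formula → Formula
  | [], A => A
  | d :: ds, A => dmdF d (applyDmds ds A)

/-- A general path axiom `ΠA → ΣA`, given by the strings `Π` (ant) and `Σ` (suc). -/
structure GenPath : Type where
  ant : List Dmd
  suc : List Dmd

/-- A path axiom `ΠA → ⟨?⟩A`. -/
structure PathAx : Type where
  ant : List Dmd
  suc : Dmd
deriving DecidableEq

/-- Every path axiom is a general path axiom. -/
def pathToGen (F : PathAx) : GenPath := ⟨F.ant, [F.suc]⟩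

/-- All instances `ΠA → ΣA` of the general path axioms in `GP`. -/
def gpInstances (GP : Set GenPath) : Set Formula :=
  {F | ∃ gp ∈ GP, ∃ A : Formula, F = (applyDmds gp.ant A).imp (applyDmds gp.suc A)}

/-- The Hilbert system `Kt + S`: classical propositional axioms, modus ponens,
    the tense axioms, and necessitation for □ and ■, plus the axioms in `S`. -/
inductive KtProof (S : Set Formula) : Formula → Prop
  | ax {A : Formula} : A ∈ S → KtProof S A
  | pl1 (A B : Formula) : KtProof S (A.imp (B.imp A))
  | pl2 (A B : Formula) : KtProof S ((B.dual.imp A.dual).imp (A.imp B))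
  | pl3 (A B C : Formula) :
      KtProof S ((A.imp (B.imp C)).imp ((A.imp B).imp (A.imp C)))
  | tense1 (A : Formula) : KtProof S (A.imp (Formula.box (Formula.bdia A)))
  | tense2 (A : Formula) : KtProof S (A.imp (Formula.bbox (Formula.dia A)))
  | kbox (A B : Formula) :
      KtProof S ((Formula.box (A.imp B)).imp ((Formula.box A).imp (Formula.box B)))
  | kbbox (A B : Formula) :
      KtProof S ((Formula.bbox (A.imp B)).imp ((Formula.bbox A).imp (Formula.bbox B)))
  | boxdual (A : Formula) :
      KtProof S ((Formula.box A).iffF (Formula.dia A.dual).dual)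
  | bboxdual (A : Formula) :
      KtProof S ((Formula.bbox A).iffF (Formula.bdia A.dual).dual)
  | mp {A B : Formula} : KtProof S (A.imp B) → KtProof S A → KtProof S B
  | necbox {A : Formula} : KtProof S A → KtProof S (Formula.box A)
  | necbbox {A : Formula} : KtProof S A → KtProof S (Formula.bbox A)

/-! ## Nested sequents -/

/-- Nested sequents: `X ::= ε | A | X, X | ∘{X} | •{X}`. -/
inductive NSeq : Type
  | empty
  | fml : Formula → NSeq
  | comma : NSeq → NSeq → NSeq
  | white : NSeq → NSeq   -- ∘{X}
  | black : NSeq → NSeq   -- •{X}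
deriving DecidableEq, Repr

/-- Comma is associative and commutative with unit ε: the induced congruence. -/
inductive NEquiv : NSeq → NSeq → Prop
  | refl (X : NSeq) : NEquiv X X
  | symm {X Y : NSeq} : NEquiv X Y → NEquiv Y X
  | trans {X Y Z : NSeq} : NEquiv X Y → NEquiv Y Z → NEquiv X Z
  | comm (X Y : NSeq) : NEquiv (X.comma Y) (Y.comma X)
  | assoc (X Y Z : NSeq) : NEquiv ((X.comma Y).comma Z) (X.comma (Y.comma Z))
  | unit (X : NSeq) : NEquiv (X.comma NSeq.empty) X
  | commaCongr {X X' Y Y' : NSeq} :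
      NEquiv X X' → NEquiv Y Y' → NEquiv (X.comma Y) (X'.comma Y')
  | whiteCongr {X Y : NSeq} : NEquiv X Y → NEquiv X.white Y.white
  | blackCongr {X Y : NSeq} : NEquiv X Y → NEquiv X.black Y.black

/-- `★₁{… ★ₙ{Y} …}` where `★ⱼ = ∘` if `⟨?⟩ⱼ = ◇` and `★ⱼ = •` if `⟨?⟩ⱼ = ◆`. -/
def nestDmds : List Dmd → NSeq → NSeq
  | [], Y => Y
  | .wd :: ds, Y => (nestDmds ds Y).white
  | .bd :: ds, Y => (nestDmds ds Y).black

/-- The structural rules `NestSt(GP)` (premise, conclusion): for each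
    `ΠA → ΣA ∈ GP`, from `X, ★Σ{Y}` infer `X, ★Π{Y}`. -/
def NestSt (GP : Set GenPath) : NSeq → NSeq → Prop :=
  fun prem concl => ∃ gp ∈ GP, ∃ X Y : NSeq,
    prem = X.comma (nestDmds gp.suc Y) ∧ concl = X.comma (nestDmds gp.ant Y)

/-- The empty set of extension rules on nested sequents. -/
def NoNest : NSeq → NSeq → Prop := fun _ _ => False

/-- The shallow nested (display) calculus `SKT` extended with the
    structural rules `Ext` (relating premise to conclusion); nested sequents are
    treated up to the congruence `NEquiv` (comma is AC with unit ε). -/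
inductive SKT (Ext : NSeq → NSeq → Prop) : NSeq → Prop
  | id (X : NSeq) (p : Nat) :
      SKT Ext ((X.comma (.fml (.pos p))).comma (.fml (.neg p)))
  | orR {X : NSeq} {A B : Formula} :
      SKT Ext (X.comma ((NSeq.fml A).comma (.fml B))) →
      SKT Ext (X.comma (.fml (.or A B)))
  | andR {X : NSeq} {A B : Formula} :
      SKT Ext (X.comma (.fml A)) → SKT Ext (X.comma (.fml B)) →
      SKT Ext (X.comma (.fml (.and A B)))
  | ctr {X Y : NSeq} : SKT Ext (X.comma (Y.comma Y)) → SKT Ext (X.comma Y)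
  | wk {X Y : NSeq} : SKT Ext X → SKT Ext (X.comma Y)
  | rf {X Y : NSeq} : SKT Ext (X.comma Y.white) → SKT Ext (X.black.comma Y)
  | rp {X Y : NSeq} : SKT Ext (X.comma Y.black) → SKT Ext (X.white.comma Y)
  | bbox {X : NSeq} {A : Formula} :
      SKT Ext (X.comma (NSeq.fml A).black) → SKT Ext (X.comma (.fml (.bbox A)))
  | box {X : NSeq} {A : Formula} :
      SKT Ext (X.comma (NSeq.fml A).white) → SKT Ext (X.comma (.fml (.box A)))
  | bdia {X Y : NSeq} {A : Formula} :
      SKT Ext ((X.comma (Y.comma (.fml A)).black).comma (.fml (.bdia A))) →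
      SKT Ext ((X.comma Y.black).comma (.fml (.bdia A)))
  | dia {X Y : NSeq} {A : Formula} :
      SKT Ext ((X.comma (Y.comma (.fml A)).white).comma (.fml (.dia A))) →
      SKT Ext ((X.comma Y.white).comma (.fml (.dia A)))
  | ext {X Y : NSeq} : Ext X Y → SKT Ext X → SKT Ext Y
  | equiv {X Y : NSeq} : SKT Ext X → NEquiv X Y → SKT Ext Y

/-! ## Deep nested calculus -/

/-- One-hole contexts over nested sequents (up to `NEquiv` this suffices). -/
inductive Ctx : Type
  | hole
  | commaL : Ctx → NSeq → Ctx
  | white : Ctx → Ctx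
  | black : Ctx → Ctx

/-- Filling the hole of a context with a nested sequent. -/
def Ctx.fill : Ctx → NSeq → NSeq
  | .hole, X => X
  | .commaL C Y, X => (C.fill X).comma Y
  | .white C, X => (C.fill X).white
  | .black C, X => (C.fill X).black

/-- The deep nested calculus `DKT` extended with rules `Ext`
    (premise, conclusion); sequents are treated up to `NEquiv`. -/
inductive DKT (Ext : NSeq → NSeq → Prop) : NSeq → Prop
  | id (C : Ctx) (p : Nat) :
      DKT Ext (C.fill ((NSeq.fml (.pos p)).comma (.fml (.neg p))))
  | andD {C : Ctx} {Y : NSeq} {A B : Formula} :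
      DKT Ext (C.fill ((NSeq.fml A).comma Y)) →
      DKT Ext (C.fill ((NSeq.fml B).comma Y)) →
      DKT Ext (C.fill ((NSeq.fml (.and A B)).comma Y))
  | orD {C : Ctx} {Y : NSeq} {A B : Formula} :
      DKT Ext (C.fill ((NSeq.fml A).comma ((NSeq.fml B).comma Y))) →
      DKT Ext (C.fill ((NSeq.fml (.or A B)).comma Y))
  | bboxD {C : Ctx} {A : Formula} :
      DKT Ext (C.fill ((NSeq.fml (.bbox A)).comma (NSeq.fml A).black)) →
      DKT Ext (C.fill (.fml (.bbox A)))
  | boxD {C : Ctx} {A : Formula} :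
      DKT Ext (C.fill ((NSeq.fml (.box A)).comma (NSeq.fml A).white)) →
      DKT Ext (C.fill (.fml (.box A)))
  | bdia1 {C : Ctx} {Y : NSeq} {A : Formula} :
      DKT Ext (C.fill ((Y.comma (.fml A)).black.comma (.fml (.bdia A)))) →
      DKT Ext (C.fill (Y.black.comma (.fml (.bdia A))))
  | bdia2 {C : Ctx} {Y : NSeq} {A : Formula} :
      DKT Ext (C.fill ((Y.comma (.fml (.bdia A))).white.comma (.fml A))) →
      DKT Ext (C.fill ((Y.comma (.fml (.bdia A))).white))
  | dia1 {C : Ctx} {Y : NSeq} {A : Formula} :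
      DKT Ext (C.fill ((Y.comma (.fml A)).white.comma (.fml (.dia A)))) →
      DKT Ext (C.fill (Y.white.comma (.fml (.dia A))))
  | dia2 {C : Ctx} {Y : NSeq} {A : Formula} :
      DKT Ext (C.fill ((Y.comma (.fml (.dia A))).black.comma (.fml A))) →
      DKT Ext (C.fill ((Y.comma (.fml (.dia A))).black))
  | ext {X Y : NSeq} : Ext X Y → DKT Ext X → DKT Ext Y
  | equiv {X Y : NSeq} : DKT Ext X → NEquiv X Y → DKT Ext Y

/-! ## Display rules and display equivalence -/

/-- `DisplayDeriv X Z`: `Z` is derivable from `X` using only the display rules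
    (rf) and (rp) (and rearrangement by the comma-congruence `NEquiv`). -/
inductive DisplayDeriv : NSeq → NSeq → Prop
  | refl (X : NSeq) : DisplayDeriv X X
  | equiv {X Y Z : NSeq} : NEquiv X Y → DisplayDeriv Y Z → DisplayDeriv X Z
  | rf {X Y Z : NSeq} :
      DisplayDeriv (X.black.comma Y) Z → DisplayDeriv (X.comma Y.white) Z
  | rp {X Y Z : NSeq} :
      DisplayDeriv (X.white.comma Y) Z → DisplayDeriv (X.comma Y.black) Z

/-- Two nested sequents are display equivalent when each is derivable from the
    other using only the display rules. -/
def DisplayEquiv (X Y : NSeq) : Prop := DisplayDeriv X Y ∧ DisplayDeriv Y X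

/-! ## Labeled sequents and the labeled calculus G3Kt -/

abbrev Label : Type := Nat

/-- A set of relational atoms `Rxy`. -/
abbrev RelSet : Type := Finset (Label × Label)

/-- A labeled sequent `R, Γ`. -/
abbrev LSeq : Type := RelSet × Multiset (Label × Formula)

/-- The label `z` occurs in the labeled sequent `S`. -/
def occursLS (z : Label) (S : LSeq) : Prop :=
  (∃ w, (z, w) ∈ S.1 ∨ (w, z) ∈ S.1) ∨ ∃ A, (z, A) ∈ S.2

/-- `R_◇ x y := Rxy` and `R_◆ x y := Ryx`. -/
def relAtom : Dmd → Label → Label → Label × Label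
  | .wd, x, y => (x, y)
  | .bd, x, y => (y, x)

/-- Relational atoms of a `Π`-chain through the list of labels `ls`. -/
def chainAtoms : List Dmd → List Label → List (Label × Label)
  | d :: ds, a :: b :: rest => relAtom d a b :: chainAtoms ds (b :: rest)
  | _, _ => []

/-- `ls` is a chain of labels for the diamond string `ds` from `x` to `y`
    (an empty string forces `x = y`). -/
def IsChainList (ds : List Dmd) (x y : Label) (ls : List Label) : Prop :=
  ls.length = ds.length + 1 ∧ ls.head? = some x ∧ ls.getLast? = some y

/-- The structural rules `LabSt(GP)` (premise, conclusion): for `ΠA → ΣA ∈ GP`,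
    from `R, R_Π x y, R_Σ x y, Γ` infer `R, R_Π x y, Γ`, where all labels in
    `R_Σ x y` other than `x, y` are eigenvariables. -/
def LabSt (GP : Set GenPath) : LSeq → LSeq → Prop :=
  fun prem concl => ∃ gp ∈ GP,
    ∃ (R : RelSet) (Γ : Multiset (Label × Formula)) (x y : Label)
      (als sls : List Label),
      IsChainList gp.ant x y als ∧ IsChainList gp.suc x y sls ∧
      concl = (R ∪ (chainAtoms gp.ant als).toFinset, Γ) ∧
      prem = (R ∪ (chainAtoms gp.ant als).toFinset ∪
                (chainAtoms gp.suc sls).toFinset, Γ) ∧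
      (∀ z ∈ sls, z ≠ x → z ≠ y → ¬ occursLS z concl)

/-- The empty set of extension rules on labeled sequents. -/
def NoExt : LSeq → LSeq → Prop := fun _ _ => False

/-- Derivations in the labeled calculus `G3Kt` extended with rules `Ext`
    (relating premise to conclusion). -/
inductive G3KtD (Ext : LSeq → LSeq → Prop) :
    RelSet → Multiset (Label × Formula) → Type
  | id (R : RelSet) (Γ : Multiset (Label × Formula)) (x : Label) (p : Nat) :
      G3KtD Ext R ((x, .pos p) ::ₘ (x, .neg p) ::ₘ Γ)
  | orR (R : RelSet) (Γ : Multiset (Label × Formula)) (x : Label) (A B : Formula)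
      (D : G3KtD Ext R ((x, A) ::ₘ (x, B) ::ₘ Γ)) :
      G3KtD Ext R ((x, .or A B) ::ₘ Γ)
  | andR (R : RelSet) (Γ : Multiset (Label × Formula)) (x : Label) (A B : Formula)
      (D1 : G3KtD Ext R ((x, A) ::ₘ Γ)) (D2 : G3KtD Ext R ((x, B) ::ₘ Γ)) :
      G3KtD Ext R ((x, .and A B) ::ₘ Γ)
  | boxR (R : RelSet) (Γ : Multiset (Label × Formula)) (x y : Label) (A : Formula)
      (hy : ¬ occursLS y (R, (x, Formula.box A) ::ₘ Γ))
      (D : G3KtD Ext (insert (x, y) R) ((y, A) ::ₘ Γ)) :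
      G3KtD Ext R ((x, .box A) ::ₘ Γ)
  | diaR (R : RelSet) (Γ : Multiset (Label × Formula)) (x y : Label) (A : Formula)
      (h : (x, y) ∈ R)
      (D : G3KtD Ext R ((y, A) ::ₘ (x, Formula.dia A) ::ₘ Γ)) :
      G3KtD Ext R ((x, .dia A) ::ₘ Γ)
  | bboxR (R : RelSet) (Γ : Multiset (Label × Formula)) (x y : Label) (A : Formula)
      (hy : ¬ occursLS y (R, (x, Formula.bbox A) ::ₘ Γ))
      (D : G3KtD Ext (insert (y, x) R) ((y, A) ::ₘ Γ)) :
      G3KtD Ext R ((x, .bbox A) ::ₘ Γ)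
  | bdiaR (R : RelSet) (Γ : Multiset (Label × Formula)) (x y : Label) (A : Formula)
      (h : (y, x) ∈ R)
      (D : G3KtD Ext R ((y, A) ::ₘ (x, Formula.bdia A) ::ₘ Γ)) :
      G3KtD Ext R ((x, .bdia A) ::ₘ Γ)
  | ext (R' : RelSet) (Γ' : Multiset (Label × Formula))
      (R : RelSet) (Γ : Multiset (Label × Formula))
      (h : Ext (R', Γ') (R, Γ)) (D : G3KtD Ext R' Γ') : G3KtD Ext R Γ

/-- Derivability in `G3Kt + Ext`. -/
def G3KtDeriv (Ext : LSeq → LSeq → Prop) (R : RelSet)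
    (Γ : Multiset (Label × Formula)) : Prop :=
  Nonempty (G3KtD Ext R Γ)

/-- `Q` holds of every labeled sequent occurring in the derivation `D`
    (including the end sequent). -/
def G3KtD.allSeq {Ext : LSeq → LSeq → Prop} (Q : LSeq → Prop) :
    ∀ {R : RelSet} {Γ : Multiset (Label × Formula)}, G3KtD Ext R Γ → Prop
  | _, _, .id R Γ x p => Q (R, (x, .pos p) ::ₘ (x, .neg p) ::ₘ Γ)
  | _, _, .orR R Γ x A B D => Q (R, (x, .or A B) ::ₘ Γ) ∧ D.allSeq Q
  | _, _, .andR R Γ x A B D1 D2 =>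
      Q (R, (x, .and A B) ::ₘ Γ) ∧ D1.allSeq Q ∧ D2.allSeq Q
  | _, _, .boxR R Γ x _ A _ D => Q (R, (x, .box A) ::ₘ Γ) ∧ D.allSeq Q
  | _, _, .diaR R Γ x _ A _ D => Q (R, (x, .dia A) ::ₘ Γ) ∧ D.allSeq Q
  | _, _, .bboxR R Γ x _ A _ D => Q (R, (x, .bbox A) ::ₘ Γ) ∧ D.allSeq Q
  | _, _, .bdiaR R Γ x _ A _ D => Q (R, (x, .bdia A) ::ₘ Γ) ∧ D.allSeq Q
  | _, _, .ext _ _ R Γ _ D => Q (R, Γ) ∧ D.allSeq Q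

/-! ## Paths, inverses, compositions, completion, propagation rules -/

/-- The inverse of a diamond: `◇⁻¹ = ◆` and `◆⁻¹ = ◇`. -/
def Dmd.inv : Dmd → Dmd
  | .wd => .bd
  | .bd => .wd

/-- The inverse `I(F)` of a path axiom `F`. -/
def PathAx.inv (F : PathAx) : PathAx := ⟨(F.ant.map Dmd.inv).reverse, F.suc.inv⟩

/-- `I(P)`, the set of inverses of the path axioms in `P`. -/
def invSet (P : Set PathAx) : Set PathAx := {F | ∃ G ∈ P, F = G.inv}

/-- The completion `P*`: the smallest set of path axioms containing `P`,
    containing `◇A → ◇A` and `◆A → ◆A`, and closed under compositions. -/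
inductive Completion (P : Set PathAx) : PathAx → Prop
  | base {F : PathAx} : F ∈ P → Completion P F
  | wrefl : Completion P ⟨[Dmd.wd], Dmd.wd⟩
  | brefl : Completion P ⟨[Dmd.bd], Dmd.bd⟩
  | comp {F G : PathAx} (i : Nat) (hi : i < G.ant.length) :
      Completion P F → Completion P G → G.ant.get ⟨i, hi⟩ = F.suc →
      Completion P ⟨G.ant.take i ++ F.ant ++ G.ant.drop (i + 1), G.suc⟩

/-- `(P ∪ I(P))*`. -/
def PStar (P : Set PathAx) : PathAx → Prop := Completion (P ∪ invSet P)

/-- A path from `x` to `y` with the given string of diamonds in the propagation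
    graph determined by the edge set `E`: each `Rxy` contributes the labeled
    edges `(x, y, ◇)` and `(y, x, ◆)`. -/
inductive LPath (E : Finset (Label × Label)) : Label → Label → List Dmd → Prop
  | nil (x : Label) : LPath E x x []
  | fwd {x z y : Label} {ds : List Dmd} :
      (x, z) ∈ E → LPath E z y ds → LPath E x y (Dmd.wd :: ds)
  | bwd {x z y : Label} {ds : List Dmd} :
      (z, x) ∈ E → LPath E z y ds → LPath E x y (Dmd.bd :: ds)

/-- The labeled propagation rules `LabPr(P)` (premise, conclusion):
    from `R, x:⟨?⟩A, y:A, Γ` infer `R, x:⟨?⟩A, Γ`, provided there is a path `π`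
    from `x` to `y` in the propagation graph of the premise whose string `Π`
    satisfies `ΠA → ⟨?⟩A ∈ (P ∪ I(P))*`. -/
def LabPr (P : Set PathAx) : LSeq → LSeq → Prop :=
  fun prem concl =>
    ∃ (R : RelSet) (Γ : Multiset (Label × Formula)) (x y : Label)
      (A : Formula) (d : Dmd) (Pi : List Dmd),
      prem = (R, (x, dmdF d A) ::ₘ (y, A) ::ₘ Γ) ∧
      concl = (R, (x, dmdF d A) ::ₘ Γ) ∧
      LPath R x y Pi ∧ PStar P ⟨Pi, d⟩

/-! ## Labeled graphs, labeled polytrees, and the translations 𝔏 and 𝔑 -/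

/-- A labeled graph `(V, E, L)`: vertices decorated with multisets of formulae. -/
structure LGraph : Type where
  V : Finset Label
  E : Finset (Label × Label)
  L : Label → Multiset Formula

/-- Union of labeled graphs (multiset union of labels at shared vertices). -/
def LGraph.union (G H : LGraph) : LGraph :=
  ⟨G.V ∪ H.V, G.E ∪ H.E, fun z => G.L z + H.L z⟩

/-- Isomorphism of labeled graphs: a bijection between the vertex sets
    preserving edges and vertex labels. -/
def LGraph.Iso (G H : LGraph) : Prop :=
  ∃ f : Label → Label, Set.BijOn f ↑G.V ↑H.V ∧
    (∀ u ∈ G.V, ∀ v ∈ G.V, ((u, v) ∈ G.E ↔ (f u, f v) ∈ H.E)) ∧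
    (∀ v ∈ G.V, G.L v = H.L (f v))

/-- A labeled graph is a labeled polytree when its underlying undirected
    graph is a tree. -/
def LGraph.IsPolytree (G : LGraph) : Prop :=
  (∀ x y : Label, (x, y) ∈ G.E → (y, x) ∉ G.E) ∧
  (∀ e ∈ G.E, e.1 ∈ G.V ∧ e.2 ∈ G.V) ∧
  ((SimpleGraph.fromRel fun a b => (a, b) ∈ G.E).induce (↑G.V : Set Label)).IsTree

/-- The translation `𝔏ₓ` from nested sequents to labeled graphs (relational,
    since fresh vertices may be chosen arbitrarily): `LabT x X G` states that
    `G` is a labeled graph obtained by translating `X` starting at vertex `x`. -/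
inductive LabT : Label → NSeq → LGraph → Prop
  | empty (x : Label) : LabT x .empty ⟨∅, ∅, fun _ => 0⟩
  | fml (x : Label) (A : Formula) :
      LabT x (.fml A) ⟨{x}, ∅, fun z => if z = x then {A} else 0⟩
  | comma {x : Label} {X Y : NSeq} {G H : LGraph} :
      LabT x X G → LabT x Y H → G.V ∩ H.V ⊆ {x} →
      LabT x (X.comma Y) (G.union H)
  | white {x y : Label} {X : NSeq} {G : LGraph} :
      LabT y X G → x ∉ G.V → x ≠ y →
      LabT x X.white ⟨insert x (insert y G.V), insert (x, y) G.E, G.L⟩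
  | black {x y : Label} {X : NSeq} {G : LGraph} :
      LabT y X G → x ∉ G.V → x ≠ y →
      LabT x X.black ⟨insert x (insert y G.V), insert (y, x) G.E, G.L⟩

/-- The translation `𝔑ₓ` from labeled polytrees (rooted at a chosen vertex `x`)
    to nested sequents: the inverse of the translation `𝔏ₓ`. -/
def NTrans (x : Label) (G : LGraph) (X : NSeq) : Prop := LabT x X G

/-- The labeled graph of a labeled sequent `R, Γ`: vertices are the occurring
    labels, edges are given by `R`, and each vertex `x` is labeled by the
    multiset `{A | x:A ∈ Γ}`. -/
def toLGraph (R : RelSet) (Γ : Multiset (Label × Formula)) : LGraph where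
  V := R.image Prod.fst ∪ R.image Prod.snd ∪ (Γ.map Prod.fst).toFinset
  E := R
  L := fun z => (Γ.filter fun p => p.1 = z).map Prod.snd

/-- The multiset of labeled formulae of a labeled graph, read as a sequent. -/
def LGraph.toSeqGamma (G : LGraph) : Multiset (Label × Formula) :=
  G.V.val.bind fun v => (G.L v).map fun A => (v, A)

/-- The set of labels occurring in a labeled sequent. -/
def seqLabels (R : RelSet) (Γ : Multiset (Label × Formula)) : Set Label :=
  {z | (∃ w, (z, w) ∈ R ∨ (w, z) ∈ R) ∨ ∃ A, (z, A) ∈ Γ}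

/-- `R, Γ` is a labeled polytree sequent: its underlying undirected graph
    (on the occurring labels) is a tree. -/
def IsPolytreeSeq (R : RelSet) (Γ : Multiset (Label × Formula)) : Prop :=
  (∀ x y : Label, (x, y) ∈ R → (y, x) ∉ R) ∧
  ((SimpleGraph.fromRel fun a b => (a, b) ∈ R).induce (seqLabels R Γ)).IsTree

/-- The labeled edges `(u, v, ◇)` and `(v, u, ◆)` of the propagation graph
    determined by an edge set. -/
def propEdges (E : Finset (Label × Label)) : Set (Label × Label × Dmd) :=
  {e | ∃ u v : Label, (u, v) ∈ E ∧ (e = (u, v, Dmd.wd) ∨ e = (v, u, Dmd.bd))}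

/-- The deep propagation rules `DeepPr(P)` (premise, conclusion), expressed via
    the labeled polytree representation of nested sequents: from
    `X[⟨?⟩A]ᵢ[A]ⱼ` infer `X[⟨?⟩A]ᵢ[∅]ⱼ`, provided there is a path from node `i`
    (= `u`) to node `j` (= `v`) in the propagation graph of the premise whose
    string `Π` satisfies `ΠA → ⟨?⟩A ∈ (P ∪ I(P))*`. -/
def DeepPrL (P : Set PathAx) : NSeq → NSeq → Prop :=
  fun prem concl =>
    ∃ (r : Label) (G : LGraph) (u v : Label) (A : Formula) (d : Dmd)
      (Pi : List Dmd),
      LabT r prem G ∧ LPath G.E u v Pi ∧ PStar P ⟨Pi, d⟩ ∧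
      dmdF d A ∈ G.L u ∧ A ∈ G.L v ∧
      LabT r concl ⟨G.V, G.E, fun z => if z = v then (G.L v).erase A else G.L z⟩

/-- Substitution of the label `y` by the label `x`. -/
def subLabel (x y z : Label) : Label := if z = y then x else z


/-! The translation `𝔏` is unique up to an isomorphism carrying root to root, whatever the
root and the fresh vertices: every clause of `𝔏` glues graphs along their root (`∘{X}` and
`•{X}` glue a single arrow onto the translation of `X`), so induction on the nested sequent
applies. Now `𝔏ₓ(X, ∘{Y})` is, on the nose, a translation `𝔏_y(•{X}, Y)` rooted at the fresh
vertex `y` introduced for `∘{Y}`, hence isomorphic to every translation `𝔏ₓ(•{X}, Y)`. -/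

namespace LGraph

structure WellFormed (G : LGraph) : Prop where
  mem_of_mem_edges : ∀ e ∈ G.E, e.1 ∈ G.V ∧ e.2 ∈ G.V
  label_eq_zero : ∀ z ∉ G.V, G.L z = 0

/-- The roots need not be vertices: the translation of `ε` has none. -/
structure IsRootedIso (f : Label → Label) (G G' : LGraph) (r r' : Label) : Prop where
  bijOn : Set.BijOn f G.V G'.V
  edge_iff : ∀ u ∈ G.V, ∀ v ∈ G.V, (u, v) ∈ G.E ↔ (f u, f v) ∈ G'.E
  label_eq : ∀ v ∈ G.V, G.L v = G'.L (f v)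
  map_root : f r = r'
  root_mem_iff : r ∈ G.V ↔ r' ∈ G'.V

def arrow (d : Dmd) (x y : Label) : LGraph := ⟨{x, y}, {relAtom d x y}, fun _ => 0⟩

theorem wellFormed_arrow (d : Dmd) (x y : Label) : (arrow d x y).WellFormed where
  mem_of_mem_edges e he := by
    cases d <;> simp_all [arrow, relAtom]
  label_eq_zero _ _ := rfl

theorem arrow_union (d : Dmd) (x y : Label) (G : LGraph) :
    (arrow d x y).union G = ⟨insert x (insert y G.V), insert (relAtom d x y) G.E, G.L⟩ := by
  simp only [arrow, union, Finset.insert_union, Finset.singleton_union, zero_add]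

theorem isRootedIso_arrow (d : Dmd) {x y x' y' : Label} (hxy : x ≠ y) (hxy' : x' ≠ y') :
    IsRootedIso (fun u => if u = x then x' else y') (arrow d x y) (arrow d x' y') y y' where
  bijOn := by
    have hy : Set.BijOn (fun u => if u = x then x' else y') {y} {y'} :=
      Set.bijOn_singleton.mpr (if_neg hxy.symm)
    simpa [arrow] using hy.insert (a := x) (by simpa using hxy')
  edge_iff u hu v hv := by
    simp only [arrow, Finset.mem_insert, Finset.mem_singleton] at hu hv
    rcases hu with rfl | rfl <;> rcases hv with rfl | rfl <;> cases d <;>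
      simp_all [arrow, relAtom, hxy.symm, hxy'.symm]
  label_eq _ _ := rfl
  map_root := if_neg hxy.symm
  root_mem_iff := by simp [arrow]

namespace IsRootedIso

variable {f : Label → Label} {G G' : LGraph} {r r' : Label}

theorem iso (hf : IsRootedIso f G G' r r') : G.Iso G' :=
  ⟨f, hf.bijOn, hf.edge_iff, hf.label_eq⟩

theorem reroot (hf : IsRootedIso f G G' r r') {x : Label} (hx : x ∈ G.V) :
    IsRootedIso f G G' x (f x) :=
  { hf with
    map_root := rfl
    root_mem_iff := iff_of_true hx (hf.bijOn.mapsTo hx) }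

theorem apply_eq_root_iff (hf : IsRootedIso f G G' r r') {u : Label} (hu : u ∈ G.V) :
    f u = r' ↔ u = r := by
  refine ⟨fun h => ?_, fun h => h ▸ hf.map_root⟩
  have hr : r ∈ G.V := hf.root_mem_iff.mpr (h ▸ hf.bijOn.mapsTo hu)
  exact hf.bijOn.injOn hu hr (h.trans hf.map_root.symm)

section Glue

variable {g F : Label → Label} {H H' : LGraph}

/-- The two pieces of a glued map can only meet at the root. -/
theorem apply_mem_iff_of_glue (hf : IsRootedIso f G G' r r') (hg : IsRootedIso g H H' r r')
    (hGH' : G'.V ∩ H'.V ⊆ {r'}) (hFf : Set.EqOn F f G.V) (hFg : Set.EqOn F g H.V)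
    {u : Label} (hu : u ∈ G.V ∪ H.V) : F u ∈ G'.V ↔ u ∈ G.V := by
  refine ⟨fun hFu => ?_, fun hu => hFf hu ▸ hf.bijOn.mapsTo hu⟩
  by_contra huG
  have huH : u ∈ H.V := (Finset.mem_union.mp hu).resolve_left huG
  have hgu : g u = r' := by
    rw [← hFg huH]
    exact Finset.mem_singleton.mp
      (hGH' (Finset.mem_inter.mpr ⟨hFu, hFg huH ▸ hg.bijOn.mapsTo huH⟩))
  obtain rfl := (hg.apply_eq_root_iff huH).mp hgu
  exact huG (hf.root_mem_iff.mpr (hgu ▸ hFg huH ▸ hFu))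

theorem edge_iff_of_apply_mem_iff (hf : IsRootedIso f G G' r r') (hG : G.WellFormed)
    (hG' : G'.WellFormed) (hFf : Set.EqOn F f G.V) {S : Finset Label}
    (hmem : ∀ u ∈ S, F u ∈ G'.V ↔ u ∈ G.V) :
    ∀ u ∈ S, ∀ v ∈ S, (u, v) ∈ G.E ↔ (F u, F v) ∈ G'.E := by
  intro u hu v hv
  by_cases huv : u ∈ G.V ∧ v ∈ G.V
  · rw [hFf huv.1, hFf huv.2]
    exact hf.edge_iff u huv.1 v huv.2
  · refine iff_of_false (fun he => huv (hG.mem_of_mem_edges _ he)) fun he => huv ?_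
    obtain ⟨hFu, hFv⟩ := hG'.mem_of_mem_edges _ he
    exact ⟨(hmem u hu).mp hFu, (hmem v hv).mp hFv⟩

theorem label_eq_of_apply_mem_iff (hf : IsRootedIso f G G' r r') (hG : G.WellFormed)
    (hG' : G'.WellFormed) (hFf : Set.EqOn F f G.V) {S : Finset Label}
    (hmem : ∀ u ∈ S, F u ∈ G'.V ↔ u ∈ G.V) :
    ∀ v ∈ S, G.L v = G'.L (F v) := by
  intro v hv
  by_cases hvG : v ∈ G.V
  · rw [hFf hvG]
    exact hf.label_eq v hvG
  · rw [hG.label_eq_zero v hvG, hG'.label_eq_zero _ (mt (hmem v hv).mp hvG)]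

theorem union (hf : IsRootedIso f G G' r r') (hg : IsRootedIso g H H' r r')
    (hG : G.WellFormed) (hH : H.WellFormed) (hG' : G'.WellFormed) (hH' : H'.WellFormed)
    (hGH : G.V ∩ H.V ⊆ {r}) (hGH' : G'.V ∩ H'.V ⊆ {r'}) :
    IsRootedIso (fun u => if u ∈ G.V then f u else g u) (G.union H) (G'.union H') r r' := by
  set F : Label → Label := fun u => if u ∈ G.V then f u else g u
  have hFf : Set.EqOn F f G.V := fun u hu => if_pos hu
  have hFg : Set.EqOn F g H.V := by
    intro u hu
    by_cases huG : u ∈ G.V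
    · obtain rfl := Finset.mem_singleton.mp (hGH (Finset.mem_inter.mpr ⟨huG, hu⟩))
      exact (if_pos huG).trans (hf.map_root.trans hg.map_root.symm)
    · exact if_neg huG
  have hmemG : ∀ u ∈ G.V ∪ H.V, F u ∈ G'.V ↔ u ∈ G.V := fun u hu =>
    hf.apply_mem_iff_of_glue hg hGH' hFf hFg hu
  have hmemH : ∀ u ∈ G.V ∪ H.V, F u ∈ H'.V ↔ u ∈ H.V := fun u hu =>
    hg.apply_mem_iff_of_glue hf (by rwa [Finset.inter_comm]) hFg hFf
      (by rwa [Finset.union_comm])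
  have hinj : Set.InjOn F ↑(G.V ∪ H.V) := by
    intro u hu v hv huv
    by_cases huG : u ∈ G.V
    · have hvG : v ∈ G.V := (hmemG v hv).mp (huv ▸ (hmemG u hu).mpr huG)
      exact hf.bijOn.injOn huG hvG (by rwa [← hFf huG, ← hFf hvG])
    · have huH : u ∈ H.V := (Finset.mem_union.mp hu).resolve_left huG
      have hvH : v ∈ H.V := (hmemH v hv).mp (huv ▸ (hmemH u hu).mpr huH)
      exact hg.bijOn.injOn huH hvH (by rwa [← hFg huH, ← hFg hvH])
  refine ⟨?_, ?_, ?_, ?_, ?_⟩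
  · simpa only [LGraph.union, Finset.coe_union] using
      (hf.bijOn.congr hFf.symm).union (hg.bijOn.congr hFg.symm) (by simpa using hinj)
  · intro u hu v hv
    simp only [LGraph.union, Finset.mem_union]
    exact or_congr (hf.edge_iff_of_apply_mem_iff hG hG' hFf hmemG u hu v hv)
      (hg.edge_iff_of_apply_mem_iff hH hH' hFg hmemH u hu v hv)
  · intro v hv
    exact congrArg₂ (· + ·) (hf.label_eq_of_apply_mem_iff hG hG' hFf hmemG v hv)
      (hg.label_eq_of_apply_mem_iff hH hH' hFg hmemH v hv)
  · by_cases hr : r ∈ G.V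
    · exact (hFf hr).trans hf.map_root
    · exact (if_neg hr).trans hg.map_root
  · simp only [LGraph.union, Finset.mem_union, hf.root_mem_iff, hg.root_mem_iff]

end Glue

theorem insert_arrow (d : Dmd) (hf : IsRootedIso f G G' r r') (hG : G.WellFormed)
    (hG' : G'.WellFormed) {x x' : Label} (hx : x ∉ G.V) (hxr : x ≠ r) (hx' : x' ∉ G'.V)
    (hxr' : x' ≠ r') :
    ∃ F, IsRootedIso F ⟨insert x (insert r G.V), insert (relAtom d x r) G.E, G.L⟩
      ⟨insert x' (insert r' G'.V), insert (relAtom d x' r') G'.E, G'.L⟩ x x' := by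
  have hdisj : ∀ {x r : Label} {G : LGraph}, x ∉ G.V → (arrow d x r).V ∩ G.V ⊆ {r} := by
    intro x r G hx z hz
    simp only [arrow, Finset.mem_inter, Finset.mem_insert, Finset.mem_singleton] at hz
    rcases hz with ⟨rfl | rfl, hz⟩
    · exact absurd hz hx
    · exact Finset.mem_singleton_self z
  have hglue := (isRootedIso_arrow d hxr hxr').union hf (wellFormed_arrow d x r) hG
    (wellFormed_arrow d x' r') hG' (hdisj hx) (hdisj hx')
  have hxV : x ∈ (arrow d x r).V := by simp [arrow]
  have hrerooted := hglue.reroot (Finset.mem_union_left G.V hxV)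
  simp only [if_pos hxV] at hrerooted
  rw [← arrow_union, ← arrow_union]
  exact ⟨_, hrerooted⟩

end IsRootedIso

end LGraph

open LGraph

theorem LabT.wellFormed {r : Label} {S : NSeq} {G : LGraph} (h : LabT r S G) : G.WellFormed := by
  induction h with
  | empty => exact ⟨by simp, fun _ _ => rfl⟩
  | fml x A => exact ⟨by simp, fun z hz => by simp_all⟩
  | comma _ _ _ ih₁ ih₂ =>
    refine ⟨fun e he => ?_, fun z hz => ?_⟩
    · simp only [LGraph.union, Finset.mem_union] at he ⊢
      rcases he with he | he
      · exact (ih₁.mem_of_mem_edges e he).imp Or.inl Or.inl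
      · exact (ih₂.mem_of_mem_edges e he).imp Or.inr Or.inr
    · simp only [LGraph.union, Finset.mem_union, not_or] at hz ⊢
      rw [ih₁.label_eq_zero z hz.1, ih₂.label_eq_zero z hz.2, add_zero]
  | white _ _ _ ih | black _ _ _ ih =>
    refine ⟨fun e he => ?_, fun z hz => ih.label_eq_zero z (by simp_all)⟩
    simp only [Finset.mem_insert] at he ⊢
    rcases he with rfl | he
    · simp
    · exact (ih.mem_of_mem_edges e he).imp (Or.inr ∘ Or.inr) (Or.inr ∘ Or.inr)

theorem LabT.exists_isRootedIso {r r' : Label} {S : NSeq} {G G' : LGraph} (h : LabT r S G)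
    (h' : LabT r' S G') : ∃ f, IsRootedIso f G G' r r' := by
  induction h generalizing r' G' with
  | empty =>
    cases h'
    exact ⟨fun _ => r', by simp, by simp, by simp, rfl, by simp⟩
  | fml x A =>
    cases h'
    exact ⟨fun _ => r', by simp, by simp, by simp, rfl, by simp⟩
  | comma h₁ h₂ hdisj ih₁ ih₂ =>
    cases h' with
    | comma h₁' h₂' hdisj' =>
    obtain ⟨f, hf⟩ := ih₁ h₁'
    obtain ⟨g, hg⟩ := ih₂ h₂'
    exact ⟨_, hf.union hg h₁.wellFormed h₂.wellFormed h₁'.wellFormed h₂'.wellFormed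
      hdisj hdisj'⟩
  | white h hx hxy ih =>
    cases h' with
    | white h' hx' hxy' =>
    obtain ⟨f, hf⟩ := ih h'
    exact hf.insert_arrow .wd h.wellFormed h'.wellFormed hx hxy hx' hxy'
  | black h hx hxy ih =>
    cases h' with
    | black h' hx' hxy' =>
    obtain ⟨f, hf⟩ := ih h'
    exact hf.insert_arrow .bd h.wellFormed h'.wellFormed hx hxy hx' hxy'

theorem LabT.black_comma_of_comma_white {x : Label} {X Y : NSeq} {G : LGraph}
    (h : LabT x (X.comma Y.white) G) : ∃ y, LabT y (X.black.comma Y) G := by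
  cases h with | @comma _ _ _ G₁ _ hX hW hdisj =>
  cases hW with | @white _ y _ G₂ hY hx hxy =>
  have hy : y ∉ G₁.V := fun hy =>
    hxy (Finset.mem_singleton.mp (hdisj (Finset.mem_inter.mpr ⟨hy, by simp⟩))).symm
  have hdisj' : insert y (insert x G₁.V) ∩ G₂.V ⊆ {y} := by
    intro z hz
    simp only [Finset.mem_inter, Finset.mem_insert] at hz
    obtain ⟨rfl | rfl | hz₁, hz₂⟩ := hz
    · exact Finset.mem_singleton_self z
    · exact absurd hz₂ hx
    · have hzx := Finset.mem_singleton.mp (hdisj (Finset.mem_inter.mpr ⟨hz₁, by simp [hz₂]⟩))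
      exact absurd (hzx ▸ hz₂) hx
  refine ⟨y, ?_⟩
  convert (LabT.black hX hy (Ne.symm hxy)).comma hY hdisj' using 1
  simp only [LGraph.union, LGraph.mk.injEq, and_true]
  constructor <;> ext <;> simp only [Finset.mem_union, Finset.mem_insert] <;> tauto

/-- Lemma `isoresid`: for every label `x` and all nested
    sequents `X` and `Y`, the labeled polytrees `𝔏ₓ(X, ∘{Y})` and
    `𝔏ₓ(•{X}, Y)` are isomorphic as labeled graphs. -/
theorem labelled_polytree_residuation_iso (x : Label) (X Y : NSeq) (G H : LGraph)
    (hG : LabT x (X.comma Y.white) G) (hH : LabT x (X.black.comma Y) H) :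
    G.Iso H := by
  obtain ⟨y, hG'⟩ := hG.black_comma_of_comma_white
  obtain ⟨f, hf⟩ := hG'.exists_isRootedIso hH
  exact hf.iso
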